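/- Let γ₁ : [0,L₁] → ℝ^d and γ₂ : [0,L₂] → ℝ^d be branching unit-speed curves whose derivatives γ₁' and γ₂' are Lipschitz continuous and which satisfy Assumptions 2 and 3. Then V(γ₁,γ₂) = o(V(γ₁,γ₁) + V(γ₂,γ₂)) as σ_x, σ_t → 0 with σ_x ≍ σ_t; that is, for all k₁, k₂ > 0 and all ε > 0 there exists δ > 0 such that for every σ_x ∈ (0,δ) and every σ_t with k₁σ_x ≤ σ_t ≤ k₂σ_x one has V(γ₁,γ₂) ≤ ε · (V(γ₁,γ₁) + V(γ₂,γ₂)). -/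

import Mathlib

open Set MeasureTheory

/-- The Gaussian varifold inner product of two (parameterized) curves
`f, g : ℝ → ℝ^d` with respective derivatives `f', g'`, over parameter
intervals `[0, L₁]` and `[0, L₂]`, with spatial scale `σx` and tangential scale `σt`. -/
noncomputable def vprod (d : ℕ) (σx σt L₁ L₂ : ℝ)
    (f f' g g' : ℝ → EuclideanSpace ℝ (Fin d)) : ℝ :=
  ∫ s in (0:ℝ)..L₁, ∫ t in (0:ℝ)..L₂,
    Real.exp (-‖f s - g t‖ ^ 2 / σx ^ 2) * Real.exp (-‖f' s - g' t‖ ^ 2 / σt ^ 2)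

/-- A unit-speed curve in `ℝ^d`: a continuously differentiable map `γ : [0,L] → ℝ^d`
with `L > 0`, derivative `γ'`, and `‖γ'(s)‖ = 1` for all `s ∈ [0,L]`. -/
structure UnitSpeedCurve (d : ℕ) where
  L : ℝ
  γ : ℝ → EuclideanSpace ℝ (Fin d)
  γ' : ℝ → EuclideanSpace ℝ (Fin d)
  L_pos : 0 < L
  hasDeriv : ∀ s ∈ Set.Icc (0:ℝ) L, HasDerivWithinAt γ (γ' s) (Set.Icc 0 L) s
  contDeriv : ContinuousOn γ' (Set.Icc 0 L)
  unitSpeed : ∀ s ∈ Set.Icc (0:ℝ) L, ‖γ' s‖ = 1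

/-- The Gaussian varifold inner product `V(γ₁, γ₂)` of two unit-speed curves. -/
noncomputable def V {d : ℕ} (σx σt : ℝ) (c₁ c₂ : UnitSpeedCurve d) : ℝ :=
  vprod d σx σt c₁.L c₂.L c₁.γ c₁.γ' c₂.γ c₂.γ'

/-! ### Auxiliary definitions and lemmas -/

section Aux

open intervalIntegral

/-- The integrand of the Gaussian varifold inner product. -/
noncomputable def kern {d : ℕ} (σx σt : ℝ) (f f' g g' : ℝ → EuclideanSpace ℝ (Fin d))
    (s t : ℝ) : ℝ :=
  Real.exp (-‖f s - g t‖ ^ 2 / σx ^ 2) * Real.exp (-‖f' s - g' t‖ ^ 2 / σt ^ 2)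

/-- The separated Gaussian majorant. -/
noncomputable def phi (m a σ u : ℝ) : ℝ := Real.exp (-(min u m ^ a) ^ 2 / (2 * σ ^ 2))

variable {d : ℕ} {σx σt L₁ L₂ m a σ : ℝ} {f f' g g' : ℝ → EuclideanSpace ℝ (Fin d)}

lemma vprod_eq_kern : vprod d σx σt L₁ L₂ f f' g g'
    = ∫ s in (0:ℝ)..L₁, ∫ t in (0:ℝ)..L₂, kern σx σt f f' g g' s t := rfl

lemma kern_nonneg (s t : ℝ) : 0 ≤ kern σx σt f f' g g' s t :=
  mul_nonneg (Real.exp_nonneg _) (Real.exp_nonneg _)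

lemma kern_le_one (s t : ℝ) : kern σx σt f f' g g' s t ≤ 1 := by
  have h1 : Real.exp (-‖f s - g t‖ ^ 2 / σx ^ 2) ≤ 1 := by
    rw [Real.exp_le_one_iff]
    exact div_nonpos_of_nonpos_of_nonneg (neg_nonpos.mpr (by positivity)) (by positivity)
  have h2 : Real.exp (-‖f' s - g' t‖ ^ 2 / σt ^ 2) ≤ 1 := by
    rw [Real.exp_le_one_iff]
    exact div_nonpos_of_nonpos_of_nonneg (neg_nonpos.mpr (by positivity)) (by positivity)
  have := mul_le_one₀ h1 (Real.exp_nonneg _) h2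
  simpa [kern] using this

lemma kern_contOn_right (hg : ContinuousOn g (Icc 0 L₂)) (hg' : ContinuousOn g' (Icc 0 L₂))
    (s : ℝ) : ContinuousOn (fun t => kern σx σt f f' g g' s t) (Icc 0 L₂) := by
  unfold kern; fun_prop

lemma kern_contOn_left (hf : ContinuousOn f (Icc 0 L₁)) (hf' : ContinuousOn f' (Icc 0 L₁))
    (t : ℝ) : ContinuousOn (fun s => kern σx σt f f' g g' s t) (Icc 0 L₁) := by
  unfold kern; fun_prop

lemma kern_intInt_right (hg : ContinuousOn g (Icc 0 L₂)) (hg' : ContinuousOn g' (Icc 0 L₂))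
    (s : ℝ) {u v : ℝ} (hsub : uIcc u v ⊆ Icc 0 L₂) :
    IntervalIntegrable (fun t => kern σx σt f f' g g' s t) volume u v :=
  ((kern_contOn_right hg hg' s).mono hsub).intervalIntegrable

lemma inner_contOn (hL₂ : 0 ≤ L₂)
    (hf : ContinuousOn f (Icc 0 L₁)) (hf' : ContinuousOn f' (Icc 0 L₁))
    (hg : ContinuousOn g (Icc 0 L₂)) (hg' : ContinuousOn g' (Icc 0 L₂)) :
    ContinuousOn (fun s => ∫ t in (0:ℝ)..L₂, kern σx σt f f' g g' s t) (Icc 0 L₁) := by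
  intro s₀ hs₀
  have hIoc : uIoc (0:ℝ) L₂ = Ioc 0 L₂ := uIoc_of_le hL₂
  apply intervalIntegral.continuousWithinAt_of_dominated_interval (bound := fun _ => (1:ℝ))
  · filter_upwards with s
    rw [hIoc]
    exact ((kern_contOn_right hg hg' s).mono Ioc_subset_Icc_self).aestronglyMeasurable
      measurableSet_Ioc
  · filter_upwards with s
    filter_upwards with t _
    rw [Real.norm_eq_abs, abs_of_nonneg (kern_nonneg s t)]
    exact kern_le_one s t
  · exact intervalIntegrable_const
  · filter_upwards with t ht
    rw [hIoc] at ht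
    exact kern_contOn_left hf hf' t s₀ hs₀

lemma curve_cont (c : UnitSpeedCurve d) : ContinuousOn c.γ (Icc 0 c.L) :=
  fun s hs => (c.hasDeriv s hs).continuousWithinAt

/-- Lower bound for the diagonal term. -/
lemma diag_lower (c : UnitSpeedCurve d) (K : NNReal) (hlip : LipschitzOnWith K c.γ' (Icc 0 c.L))
    {k₁ : ℝ} (hk₁ : 0 < k₁) (hσx : 0 < σx) (hσxL : σx ≤ c.L / 2) (hσt : k₁ * σx ≤ σt) :
    Real.exp (-1) * Real.exp (-((K:ℝ) ^ 2 / k₁ ^ 2)) * (σx * (c.L / 2)) ≤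
      ∫ s in (0:ℝ)..c.L, ∫ t in (0:ℝ)..c.L, kern σx σt c.γ c.γ' c.γ c.γ' s t := by
  set L := c.L with hLdef
  have hL : 0 < L := c.L_pos
  have hσt0 : 0 < σt := lt_of_lt_of_le (by positivity) hσt
  have hγc := curve_cont c
  have hγ'c := c.contDeriv
  set c₀ := Real.exp (-1) * Real.exp (-((K:ℝ) ^ 2 / k₁ ^ 2)) with hc₀def
  have hpt : ∀ s ∈ Icc (0:ℝ) (L / 2), ∀ t ∈ Icc s (s + σx),
      c₀ ≤ kern σx σt c.γ c.γ' c.γ c.γ' s t := by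
    intro s hs t ht
    have hsI : s ∈ Icc (0:ℝ) L := ⟨hs.1, le_trans hs.2 (by linarith)⟩
    have htI : t ∈ Icc (0:ℝ) L := ⟨le_trans hs.1 ht.1, by
      have := ht.2; have := hs.2; linarith⟩
    have hst : |s - t| ≤ σx := by
      rw [abs_sub_comm, abs_of_nonneg (by linarith [ht.1])]
      linarith [ht.2]
    have h1 : ‖c.γ s - c.γ t‖ ≤ σx := by
      have := (convex_Icc (0:ℝ) L).norm_image_sub_le_of_norm_hasDerivWithin_le (f := c.γ) (f' := c.γ')
        c.hasDeriv (fun x hx => le_of_eq (c.unitSpeed x hx)) htI hsI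
      calc ‖c.γ s - c.γ t‖ ≤ 1 * ‖s - t‖ := this
        _ = |s - t| := by rw [one_mul, Real.norm_eq_abs]
        _ ≤ σx := hst
    have h2 : ‖c.γ' s - c.γ' t‖ ≤ (K:ℝ) * σx := by
      have := hlip.dist_le_mul s hsI t htI
      rw [dist_eq_norm] at this
      calc ‖c.γ' s - c.γ' t‖ ≤ (K:ℝ) * dist s t := this
        _ ≤ (K:ℝ) * σx := by
            apply mul_le_mul_of_nonneg_left _ K.coe_nonneg
            rw [Real.dist_eq]; exact hst
    have e1 : Real.exp (-1) ≤ Real.exp (-‖c.γ s - c.γ t‖ ^ 2 / σx ^ 2) := by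
      apply Real.exp_le_exp.mpr
      rw [neg_div, neg_le_neg_iff, div_le_one (by positivity)]
      nlinarith [norm_nonneg (c.γ s - c.γ t)]
    have e2 : Real.exp (-((K:ℝ) ^ 2 / k₁ ^ 2)) ≤
        Real.exp (-‖c.γ' s - c.γ' t‖ ^ 2 / σt ^ 2) := by
      apply Real.exp_le_exp.mpr
      rw [neg_div, neg_le_neg_iff, div_le_div_iff₀ (by positivity) (by positivity)]
      have hks : (k₁ * σx) ^ 2 ≤ σt ^ 2 := pow_le_pow_left₀ (by positivity) hσt 2
      have hN2 : ‖c.γ' s - c.γ' t‖ ^ 2 ≤ ((K:ℝ) * σx) ^ 2 := pow_le_pow_left₀ (norm_nonneg _) h2 2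
      nlinarith [mul_le_mul_of_nonneg_left hks (sq_nonneg (K:ℝ)),
        mul_le_mul_of_nonneg_right hN2 (sq_nonneg k₁)]
    exact mul_le_mul e1 e2 (Real.exp_nonneg _) (Real.exp_nonneg _)
  have hinner : ∀ s ∈ Icc (0:ℝ) (L / 2),
      c₀ * σx ≤ ∫ t in (0:ℝ)..L, kern σx σt c.γ c.γ' c.γ c.γ' s t := by
    intro s hs
    have hs2 : s + σx ≤ L := by linarith [hs.2]
    have i1 : IntervalIntegrable (fun t => kern σx σt c.γ c.γ' c.γ c.γ' s t) volume 0 s :=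
      kern_intInt_right hγc hγ'c s (by rw [uIcc_of_le hs.1]; exact Icc_subset_Icc le_rfl (by linarith))
    have i2 : IntervalIntegrable (fun t => kern σx σt c.γ c.γ' c.γ c.γ' s t) volume s (s + σx) :=
      kern_intInt_right hγc hγ'c s (by rw [uIcc_of_le (by linarith)]; exact Icc_subset_Icc hs.1 hs2)
    have i3 : IntervalIntegrable (fun t => kern σx σt c.γ c.γ' c.γ c.γ' s t) volume (s + σx) L :=
      kern_intInt_right hγc hγ'c s (by rw [uIcc_of_le hs2]; exact Icc_subset_Icc (by linarith [hs.1]) le_rfl)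
    have hsplit : (∫ t in (0:ℝ)..L, kern σx σt c.γ c.γ' c.γ c.γ' s t)
        = (∫ t in (0:ℝ)..s, kern σx σt c.γ c.γ' c.γ c.γ' s t)
          + ((∫ t in s..(s+σx), kern σx σt c.γ c.γ' c.γ c.γ' s t)
          + (∫ t in (s+σx)..L, kern σx σt c.γ c.γ' c.γ c.γ' s t)) := by
      rw [integral_add_adjacent_intervals i2 i3, integral_add_adjacent_intervals i1 (i2.trans i3)]
    have hb1 : 0 ≤ ∫ t in (0:ℝ)..s, kern σx σt c.γ c.γ' c.γ c.γ' s t :=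
      integral_nonneg hs.1 (fun u _ => kern_nonneg s u)
    have hb3 : 0 ≤ ∫ t in (s+σx)..L, kern σx σt c.γ c.γ' c.γ c.γ' s t :=
      integral_nonneg hs2 (fun u _ => kern_nonneg s u)
    have hb2 : c₀ * σx ≤ ∫ t in s..(s+σx), kern σx σt c.γ c.γ' c.γ c.γ' s t := by
      have := integral_mono_on (f := fun _ => c₀) (μ := volume) (a := s) (b := s + σx)
        (by linarith) intervalIntegrable_const i2 (fun t ht => hpt s hs t ht)
      rw [intervalIntegral.integral_const] at this
      calc c₀ * σx = (s + σx - s) • c₀ := by rw [smul_eq_mul]; ring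
        _ ≤ _ := this
    linarith [hsplit, hb1, hb3, hb2]
  have hGcont : ContinuousOn (fun s => ∫ t in (0:ℝ)..L, kern σx σt c.γ c.γ' c.γ c.γ' s t)
      (Icc 0 L) := inner_contOn hL.le hγc hγ'c hγc hγ'c
  have g1 : IntervalIntegrable (fun s => ∫ t in (0:ℝ)..L, kern σx σt c.γ c.γ' c.γ c.γ' s t)
      volume 0 (L/2) :=
    (hGcont.mono (by rw [uIcc_of_le (by linarith)]; exact Icc_subset_Icc le_rfl (by linarith))).intervalIntegrable
  have g2 : IntervalIntegrable (fun s => ∫ t in (0:ℝ)..L, kern σx σt c.γ c.γ' c.γ c.γ' s t)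
      volume (L/2) L :=
    (hGcont.mono (by rw [uIcc_of_le (by linarith)]; exact Icc_subset_Icc (by linarith) le_rfl)).intervalIntegrable
  have hsplit2 : (∫ s in (0:ℝ)..L, ∫ t in (0:ℝ)..L, kern σx σt c.γ c.γ' c.γ c.γ' s t)
      = (∫ s in (0:ℝ)..(L/2), ∫ t in (0:ℝ)..L, kern σx σt c.γ c.γ' c.γ c.γ' s t)
        + (∫ s in (L/2)..L, ∫ t in (0:ℝ)..L, kern σx σt c.γ c.γ' c.γ c.γ' s t) := by
    rw [integral_add_adjacent_intervals g1 g2]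
  have hb1 : c₀ * σx * (L/2) ≤ ∫ s in (0:ℝ)..(L/2), ∫ t in (0:ℝ)..L, kern σx σt c.γ c.γ' c.γ c.γ' s t := by
    have := integral_mono_on (f := fun _ => c₀ * σx) (μ := volume) (a := 0) (b := L/2)
      (by linarith) intervalIntegrable_const g1 hinner
    rw [intervalIntegral.integral_const] at this
    calc c₀ * σx * (L/2) = (L/2 - 0) • (c₀ * σx) := by rw [smul_eq_mul]; ring
      _ ≤ _ := this
  have hb2 : 0 ≤ ∫ s in (L/2)..L, ∫ t in (0:ℝ)..L, kern σx σt c.γ c.γ' c.γ c.γ' s t := by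
    apply integral_nonneg (by linarith)
    intro u _
    exact integral_nonneg hL.le (fun t _ => kern_nonneg u t)
  calc Real.exp (-1) * Real.exp (-((K:ℝ) ^ 2 / k₁ ^ 2)) * (σx * (L / 2)) = c₀ * σx * (L/2) := by
        rw [hc₀def]; ring
    _ ≤ _ := by rw [hsplit2]; linarith

lemma phi_cont (ha : 0 < a) : Continuous (phi m a σ) := by
  have h1 : Continuous fun u : ℝ => min u m ^ a :=
    (Real.continuous_rpow_const ha.le).comp (continuous_id.min continuous_const)
  unfold phi; fun_prop

lemma phi_nonneg (u : ℝ) : 0 ≤ phi m a σ u := Real.exp_nonneg _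

lemma phi_le_one (u : ℝ) : phi m a σ u ≤ 1 := by
  rw [phi, Real.exp_le_one_iff]
  exact div_nonpos_of_nonpos_of_nonneg (neg_nonpos.mpr (by positivity)) (by positivity)

lemma kern_le_phi_mul (hσt : 0 < σt) (s t : ℝ)
    (hA : min s m ^ a ≤ ‖f' s - g' t‖) (hB : min t m ^ a ≤ ‖f' s - g' t‖)
    (hA0 : 0 ≤ min s m ^ a) (hB0 : 0 ≤ min t m ^ a) :
    kern σx σt f f' g g' s t ≤ phi m a σt s * phi m a σt t := by
  set N := ‖f' s - g' t‖
  set A := min s m ^ a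
  set B := min t m ^ a
  have h1 : Real.exp (-‖f s - g t‖ ^ 2 / σx ^ 2) ≤ 1 := by
    rw [Real.exp_le_one_iff]
    exact div_nonpos_of_nonpos_of_nonneg (neg_nonpos.mpr (by positivity)) (by positivity)
  have key : -N ^ 2 / σt ^ 2 ≤ -A ^ 2 / (2 * σt ^ 2) + -B ^ 2 / (2 * σt ^ 2) := by
    rw [← add_div, div_le_div_iff₀ (by positivity) (by positivity)]
    have hA2 : A ^ 2 ≤ N ^ 2 := pow_le_pow_left₀ hA0 hA 2
    have hB2 : B ^ 2 ≤ N ^ 2 := pow_le_pow_left₀ hB0 hB 2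
    nlinarith [sq_nonneg σt, hA2, hB2]
  have h2 : Real.exp (-N ^ 2 / σt ^ 2) ≤ phi m a σt s * phi m a σt t := by
    rw [phi, phi, ← Real.exp_add]
    exact Real.exp_le_exp.mpr key
  calc kern σx σt f f' g g' s t ≤ 1 * Real.exp (-N ^ 2 / σt ^ 2) := by
        rw [one_mul]
        exact mul_le_mul_of_nonneg_right h1 (Real.exp_nonneg _) |>.trans (by rw [one_mul])
    _ ≤ phi m a σt s * phi m a σt t := by rw [one_mul]; exact h2

lemma integral_phi_le {L r : ℝ} (hL : 0 ≤ L) (hr : 0 < r) (hrm : r ≤ m)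
    (ha : 0 < a) :
    ∫ u in (0:ℝ)..L, phi m a σ u ≤ r + L * Real.exp (-(r ^ a) ^ 2 / (2 * σ ^ 2)) := by
  set E := Real.exp (-(r ^ a) ^ 2 / (2 * σ ^ 2)) with hE
  have hE0 : 0 ≤ E := Real.exp_nonneg _
  have hcont := phi_cont (m := m) (σ := σ) ha
  have hint : ∀ u v : ℝ, IntervalIntegrable (phi m a σ) volume u v :=
    fun u v => hcont.intervalIntegrable u v
  rcases le_or_gt L r with h | h
  · have : ∫ u in (0:ℝ)..L, phi m a σ u ≤ ∫ _u in (0:ℝ)..L, (1:ℝ) :=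
      integral_mono_on hL (hint 0 L) intervalIntegrable_const (fun u _ => phi_le_one u)
    rw [intervalIntegral.integral_const, smul_eq_mul, mul_one] at this
    nlinarith [mul_nonneg hL hE0]
  · have hsplit : (∫ u in (0:ℝ)..L, phi m a σ u)
        = (∫ u in (0:ℝ)..r, phi m a σ u) + ∫ u in r..L, phi m a σ u :=
      (integral_add_adjacent_intervals (hint 0 r) (hint r L)).symm
    have hb1 : ∫ u in (0:ℝ)..r, phi m a σ u ≤ r := by
      have : ∫ u in (0:ℝ)..r, phi m a σ u ≤ ∫ _u in (0:ℝ)..r, (1:ℝ) :=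
        integral_mono_on hr.le (hint 0 r) intervalIntegrable_const (fun u _ => phi_le_one u)
      rw [intervalIntegral.integral_const, smul_eq_mul, mul_one] at this
      linarith
    have hb2 : ∫ u in r..L, phi m a σ u ≤ (L - r) * E := by
      have hpt : ∀ u ∈ Icc r L, phi m a σ u ≤ E := by
        intro u hu
        have hmin : r ≤ min u m := le_min hu.1 hrm
        have hra : r ^ a ≤ min u m ^ a := Real.rpow_le_rpow hr.le hmin ha.le
        have hsq : (r ^ a) ^ 2 ≤ (min u m ^ a) ^ 2 :=
          pow_le_pow_left₀ (Real.rpow_nonneg hr.le a) hra 2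
        rw [phi, hE]
        apply Real.exp_le_exp.mpr
        apply div_le_div_of_nonneg_right (by linarith) (by positivity) |>.trans_eq rfl
      have := integral_mono_on h.le (hint r L) intervalIntegrable_const hpt
      rw [intervalIntegral.integral_const, smul_eq_mul] at this
      linarith
    have : (L - r) * E ≤ L * E := by nlinarith [hr]
    linarith

lemma exp_neg_le_pow {x : ℝ} (hx : 0 < x) {k : ℕ} (hk : 0 < k) :
    Real.exp (-x) ≤ ((k : ℝ) / x) ^ k := by
  have hxk : (0:ℝ) < x / k := by positivity
  have h1 : (x / k) ^ k ≤ Real.exp x := by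
    have : Real.exp x = (Real.exp (x / k)) ^ k := by
      rw [← Real.exp_nat_mul]
      congr 1
      field_simp
    rw [this]
    exact pow_le_pow_left₀ hxk.le (by linarith [Real.add_one_le_exp (x / k)]) k
  have hpow : (0:ℝ) < (x / k) ^ k := pow_pos hxk k
  rw [Real.exp_neg]
  calc (Real.exp x)⁻¹ ≤ ((x / k) ^ k)⁻¹ := inv_anti₀ hpow h1
    _ = ((k : ℝ) / x) ^ k := by rw [← inv_pow, inv_div]

lemma E_le_const_rpow {p : ℝ} {k : ℕ} (hσ : 0 < σ) (ha : 0 < a) (hp : 0 < p) (hk : 0 < k)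
    (hpk : p * (1 + 2 * a * (k : ℝ)) = 2 * (k : ℝ)) :
    Real.exp (-((σ ^ p) ^ a) ^ 2 / (2 * σ ^ 2)) ≤ (2 * (k : ℝ)) ^ k * σ ^ p := by
  have h1 : (σ ^ p) ^ a = σ ^ (p * a) := (Real.rpow_mul hσ.le p a).symm
  have h2 : ((σ ^ p) ^ a) ^ 2 = σ ^ (p * a * 2) := by
    rw [h1, Real.rpow_mul hσ.le (p * a) 2, Real.rpow_two]
  set x : ℝ := σ ^ (p * a * 2) / (2 * σ ^ 2) with hxdef
  have hx : 0 < x := by positivity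
  have hgoal : -((σ ^ p) ^ a) ^ 2 / (2 * σ ^ 2) = -x := by
    rw [h2, hxdef]; ring
  rw [hgoal]
  have hb := exp_neg_le_pow hx hk
  refine hb.trans (le_of_eq ?_)
  have hkx : (k : ℝ) / x = 2 * (k : ℝ) * σ ^ (2 - p * a * 2) := by
    rw [hxdef, Real.rpow_sub hσ, Real.rpow_two]
    field_simp
  have hexp : (2 - p * a * 2) * (k : ℝ) = p := by linear_combination -hpk
  rw [hkx, mul_pow, ← Real.rpow_natCast (σ ^ (2 - p * a * 2)) k, ← Real.rpow_mul hσ.le, hexp]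

/-- Tangent-difference lower bound from Assumptions 2, 3 and branching. -/
lemma tangent_lower {ε₀ : ℝ} {g₁ g₂ : ℝ → EuclideanSpace ℝ (Fin d)}
    (hL₁ : 0 < L₁) (hL₂ : 0 ≤ L₂) (hε₀ : 0 < ε₀) (ha : 0 < a)
    (hdir : g₁ 0 = g₂ 0)
    (hA2 : ∀ s ∈ Icc (0:ℝ) L₁, ∀ s' ∈ Icc (0:ℝ) L₁, ∀ t ∈ Icc (0:ℝ) L₂, ∀ t' ∈ Icc (0:ℝ) L₂,
      s + t ≤ s' + t' → ‖g₁ s - g₂ t‖ ≤ ‖g₁ s' - g₂ t'‖)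
    (hA3 : ∀ s ∈ Ioc (0:ℝ) ε₀, s ^ a ≤ ‖g₁ s - g₁ 0‖)
    {s t : ℝ} (hs : s ∈ Icc (0:ℝ) L₁) (ht : t ∈ Icc (0:ℝ) L₂) :
    min (s + t) (min ε₀ L₁) ^ a ≤ ‖g₁ s - g₂ t‖ := by
  set m := min ε₀ L₁ with hmdef
  have hm : 0 < m := lt_min hε₀ hL₁
  rcases eq_or_lt_of_le (by linarith [hs.1, ht.1] : (0:ℝ) ≤ s + t) with h0 | hpos
  · rw [← h0, min_eq_left hm.le, Real.zero_rpow ha.ne']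
    exact norm_nonneg _
  · set s₀ := min (s + t) m with hs₀def
    have hs₀pos : 0 < s₀ := lt_min hpos hm
    have hs₀ε : s₀ ≤ ε₀ := (min_le_right _ _).trans (min_le_left _ _)
    have hs₀L : s₀ ≤ L₁ := (min_le_right _ _).trans (min_le_right _ _)
    have h3 : s₀ ^ a ≤ ‖g₁ s₀ - g₂ 0‖ := by
      rw [← hdir]
      exact hA3 s₀ ⟨hs₀pos, hs₀ε⟩
    refine h3.trans (hA2 s₀ ⟨hs₀pos.le, hs₀L⟩ s hs 0 ⟨le_rfl, hL₂⟩ t ht ?_)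
    rw [add_zero]
    exact min_le_left _ _

/-- The cross integral is bounded by the product of the `phi` integrals. -/
lemma cross_le (hL₁ : 0 ≤ L₁) (hL₂ : 0 ≤ L₂) (ha : 0 < a)
    (hf : ContinuousOn f (Icc 0 L₁)) (hf' : ContinuousOn f' (Icc 0 L₁))
    (hg : ContinuousOn g (Icc 0 L₂)) (hg' : ContinuousOn g' (Icc 0 L₂))
    (hpt : ∀ s ∈ Icc (0:ℝ) L₁, ∀ t ∈ Icc (0:ℝ) L₂,
      kern σx σt f f' g g' s t ≤ phi m a σt s * phi m a σt t) :
    (∫ s in (0:ℝ)..L₁, ∫ t in (0:ℝ)..L₂, kern σx σt f f' g g' s t)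
      ≤ (∫ u in (0:ℝ)..L₁, phi m a σt u) * ∫ u in (0:ℝ)..L₂, phi m a σt u := by
  set I₂ := ∫ u in (0:ℝ)..L₂, phi m a σt u with hI₂def
  have hinner : ∀ s ∈ Icc (0:ℝ) L₁,
      (∫ t in (0:ℝ)..L₂, kern σx σt f f' g g' s t) ≤ phi m a σt s * I₂ := by
    intro s hs
    have h := integral_mono_on (μ := volume) hL₂
      (kern_intInt_right hg hg' s (by rw [uIcc_of_le hL₂]))
      ((continuous_const.mul (phi_cont ha)).intervalIntegrable 0 L₂)
      (fun t ht => hpt s hs t ht)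
    calc (∫ t in (0:ℝ)..L₂, kern σx σt f f' g g' s t)
        ≤ ∫ t in (0:ℝ)..L₂, phi m a σt s * phi m a σt t := by convert h using 2; rfl
    _ = phi m a σt s * I₂ := intervalIntegral.integral_const_mul _ _
  have houter := integral_mono_on (μ := volume) hL₁
    ((inner_contOn hL₂ hf hf' hg hg').mono (by rw [uIcc_of_le hL₁])).intervalIntegrable
    (((phi_cont ha).mul continuous_const).intervalIntegrable 0 L₁)
    hinner
  calc (∫ s in (0:ℝ)..L₁, ∫ t in (0:ℝ)..L₂, kern σx σt f f' g g' s t)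
      ≤ ∫ s in (0:ℝ)..L₁, phi m a σt s * I₂ := houter
    _ = (∫ u in (0:ℝ)..L₁, phi m a σt u) * I₂ := intervalIntegral.integral_mul_const _ _

end Aux


/-- **Lemma 2 (branching curves).** If `γ₁, γ₂` are branching unit-speed curves with
Lipschitz derivatives satisfying Assumptions 2 and 3, then
`V(γ₁,γ₂) = o(V(γ₁,γ₁) + V(γ₂,γ₂))` as `σx, σt → 0` with `σx ≍ σt`. -/
theorem branching_cross_term_negligible {d : ℕ} (c₁ c₂ : UnitSpeedCurve d)
    (hlip₁ : ∃ K : NNReal, LipschitzOnWith K c₁.γ' (Set.Icc 0 c₁.L))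
    (hlip₂ : ∃ K : NNReal, LipschitzOnWith K c₂.γ' (Set.Icc 0 c₂.L))
    (hbranch_pt : c₁.γ 0 = c₂.γ 0)
    (hbranch_dir : c₁.γ' 0 = c₂.γ' 0)
    (hA2 : ∀ s ∈ Set.Icc (0:ℝ) c₁.L, ∀ s' ∈ Set.Icc (0:ℝ) c₁.L,
      ∀ t ∈ Set.Icc (0:ℝ) c₂.L, ∀ t' ∈ Set.Icc (0:ℝ) c₂.L,
      s + t ≤ s' + t' → ‖c₁.γ' s - c₂.γ' t‖ ≤ ‖c₁.γ' s' - c₂.γ' t'‖)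
    (hA3 : ∃ ε₀ > (0:ℝ), ∃ a ∈ Set.Ioo (0:ℝ) 2, ∀ s ∈ Set.Ioc (0:ℝ) ε₀,
      s ^ a ≤ ‖c₁.γ' s - c₁.γ' 0‖ ∧ s ^ a ≤ ‖c₂.γ' s - c₂.γ' 0‖) :
    ∀ k₁ > (0:ℝ), ∀ k₂ > (0:ℝ), ∀ ε > (0:ℝ), ∃ δ > (0:ℝ),
      ∀ σx : ℝ, 0 < σx → σx < δ → ∀ σt : ℝ, k₁ * σx ≤ σt → σt ≤ k₂ * σx →
        V σx σt c₁ c₂ ≤ ε * (V σx σt c₁ c₁ + V σx σt c₂ c₂) := by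
  obtain ⟨K₁, hlipK₁⟩ := hlip₁
  obtain ⟨ε₀, hε₀, a, ⟨ha0, ha2⟩, hA3'⟩ := hA3
  intro k₁ hk₁ k₂ hk₂ ε hε
  have hL₁ : 0 < c₁.L := c₁.L_pos
  have hL₂ : 0 < c₂.L := c₂.L_pos
  set L₁ := c₁.L with hL₁def
  set L₂ := c₂.L with hL₂def
  set m := min ε₀ L₁ with hm_def
  have hm : 0 < m := lt_min hε₀ hL₁
  -- exponents
  set k : ℕ := ⌈1 / (4 - 2 * a)⌉₊ + 1 with hk_def
  have hk : 0 < k := Nat.succ_pos _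
  have h42 : 0 < 4 - 2 * a := by linarith
  have hkR : 1 / (4 - 2 * a) < (k : ℝ) := by
    have h1 := Nat.le_ceil (1 / (4 - 2 * a))
    have h2 : (⌈1 / (4 - 2 * a)⌉₊ : ℝ) < (k : ℝ) := by
      rw [hk_def]; push_cast; linarith
    linarith
  set p : ℝ := 2 * k / (1 + 2 * a * k) with hp_def
  have hden : 0 < 1 + 2 * a * (k : ℝ) := by positivity
  have hkpos : (0:ℝ) < (k : ℝ) := by exact_mod_cast hk
  have hp : 0 < p := by rw [hp_def]; positivity
  have hpk : p * (1 + 2 * a * (k : ℝ)) = 2 * (k : ℝ) := by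
    rw [hp_def]; field_simp
  have hhalf : 1 / 2 < p := by
    rw [hp_def, lt_div_iff₀ hden]
    have hkey : 1 < (k : ℝ) * (4 - 2 * a) := (div_lt_iff₀ h42).mp hkR
    have hkey' : 1 < 4 * (k : ℝ) - 2 * (a * (k : ℝ)) := by linear_combination hkey
    linarith only [hkey']
  set q : ℝ := 2 * p - 1 with hq_def
  have hq : 0 < q := by rw [hq_def]; linarith
  -- constants
  set c₀ : ℝ := Real.exp (-1) * Real.exp (-((K₁ : ℝ) ^ 2 / k₁ ^ 2)) with hc₀def
  have hc₀ : 0 < c₀ := by positivity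
  set Ck : ℝ := (2 * (k : ℝ)) ^ k with hCk_def
  have hCk : 0 < Ck := by positivity
  set D₁ : ℝ := 1 + L₁ * Ck with hD₁def
  set D₂ : ℝ := 1 + L₂ * Ck with hD₂def
  have hD₁ : 0 < D₁ := by positivity
  have hD₂ : 0 < D₂ := by positivity
  set Ctar : ℝ := ε * (c₀ * (L₁ / 2)) / k₂ with hCtar_def
  have hCtar : 0 < Ctar := by positivity
  set Cp : ℝ := Ctar / (D₁ * D₂) with hCp_def
  have hCp : 0 < Cp := by positivity
  -- choice of δ
  set δ : ℝ := min (min (m ^ (1 / p)) (Cp ^ (1 / q)) / k₂) (L₁ / 2) with hδ_def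
  have hmp : 0 < m ^ (1 / p) := Real.rpow_pos_of_pos hm _
  have hCpq : 0 < Cp ^ (1 / q) := Real.rpow_pos_of_pos hCp _
  have hδpos : 0 < δ := by
    rw [hδ_def]
    apply lt_min
    · positivity
    · linarith
  refine ⟨δ, hδpos, ?_⟩
  intro σx hσx hσxδ σt hσt1 hσt2
  have hσt0 : 0 < σt := lt_of_lt_of_le (by positivity) hσt1
  have hσxL : σx ≤ L₁ / 2 := (lt_of_lt_of_le hσxδ (min_le_right _ _)).le
  have hσtsmall : σt < min (m ^ (1 / p)) (Cp ^ (1 / q)) := by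
    calc σt ≤ k₂ * σx := hσt2
      _ < k₂ * δ := by exact mul_lt_mul_of_pos_left hσxδ hk₂
      _ ≤ k₂ * (min (m ^ (1 / p)) (Cp ^ (1 / q)) / k₂) :=
          mul_le_mul_of_nonneg_left (min_le_left _ _) hk₂.le
      _ = min (m ^ (1 / p)) (Cp ^ (1 / q)) := by field_simp
  have hσtm : σt ^ p ≤ m := by
    have h1 : σt < m ^ (1 / p) := lt_of_lt_of_le hσtsmall (min_le_left _ _)
    have h2 := Real.rpow_lt_rpow hσt0.le h1 hp
    rw [← Real.rpow_mul hm.le] at h2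
    rw [show 1 / p * p = 1 by field_simp, Real.rpow_one] at h2
    exact h2.le
  have hσtq : σt ^ q < Cp := by
    have h1 : σt < Cp ^ (1 / q) := lt_of_lt_of_le hσtsmall (min_le_right _ _)
    have h2 := Real.rpow_lt_rpow hσt0.le h1 hq
    rw [← Real.rpow_mul hCp.le] at h2
    rw [show 1 / q * q = 1 by field_simp, Real.rpow_one] at h2
    exact h2
  -- continuity data
  have hγ₁c : ContinuousOn c₁.γ (Icc 0 L₁) := curve_cont c₁
  have hγ₁'c : ContinuousOn c₁.γ' (Icc 0 L₁) := c₁.contDeriv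
  have hγ₂c : ContinuousOn c₂.γ (Icc 0 L₂) := curve_cont c₂
  have hγ₂'c : ContinuousOn c₂.γ' (Icc 0 L₂) := c₂.contDeriv
  -- pointwise kernel bound
  have htan : ∀ s ∈ Icc (0:ℝ) L₁, ∀ t ∈ Icc (0:ℝ) L₂,
      kern σx σt c₁.γ c₁.γ' c₂.γ c₂.γ' s t ≤ phi m a σt s * phi m a σt t := by
    intro s hs t ht
    have hN : min (s + t) m ^ a ≤ ‖c₁.γ' s - c₂.γ' t‖ := by
      rw [hm_def]
      exact tangent_lower hL₁ hL₂.le hε₀ ha0 hbranch_dir hA2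
        (fun u hu => ((hA3' u hu)).1) hs ht
    have hAm : min s m ≤ min (s + t) m := min_le_min (by linarith [ht.1]) le_rfl
    have hBm : min t m ≤ min (s + t) m := min_le_min (by linarith [hs.1]) le_rfl
    have hA0' : (0:ℝ) ≤ min s m := le_min hs.1 hm.le
    have hB0' : (0:ℝ) ≤ min t m := le_min ht.1 hm.le
    exact kern_le_phi_mul hσt0 s t
      ((Real.rpow_le_rpow hA0' hAm ha0.le).trans hN)
      ((Real.rpow_le_rpow hB0' hBm ha0.le).trans hN)
      (Real.rpow_nonneg hA0' a) (Real.rpow_nonneg hB0' a)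
  -- cross bound
  have hVeq : V σx σt c₁ c₂
      = ∫ s in (0:ℝ)..L₁, ∫ t in (0:ℝ)..L₂, kern σx σt c₁.γ c₁.γ' c₂.γ c₂.γ' s t := rfl
  set I₁ := ∫ u in (0:ℝ)..L₁, phi m a σt u with hI₁def
  set I₂ := ∫ u in (0:ℝ)..L₂, phi m a σt u with hI₂def
  have hcross : V σx σt c₁ c₂ ≤ I₁ * I₂ := by
    rw [hVeq]
    exact cross_le hL₁.le hL₂.le ha0 hγ₁c hγ₁'c hγ₂c hγ₂'c htan
  -- phi integral bounds
  have hr : 0 < σt ^ p := Real.rpow_pos_of_pos hσt0 p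
  have hE := E_le_const_rpow (σ := σt) hσt0 ha0 hp hk hpk
  have hI₁le : I₁ ≤ D₁ * σt ^ p := by
    have h1 := integral_phi_le (σ := σt) (m := m) hL₁.le hr hσtm ha0
    have h2 : L₁ * Real.exp (-((σt ^ p) ^ a) ^ 2 / (2 * σt ^ 2)) ≤ L₁ * (Ck * σt ^ p) :=
      mul_le_mul_of_nonneg_left (by rw [hCk_def]; exact hE) hL₁.le
    calc I₁ ≤ σt ^ p + L₁ * Real.exp (-((σt ^ p) ^ a) ^ 2 / (2 * σt ^ 2)) := h1
      _ ≤ σt ^ p + L₁ * (Ck * σt ^ p) := by linarith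
      _ = D₁ * σt ^ p := by rw [hD₁def]; ring
  have hI₂le : I₂ ≤ D₂ * σt ^ p := by
    have h1 := integral_phi_le (σ := σt) (m := m) hL₂.le hr hσtm ha0
    have h2 : L₂ * Real.exp (-((σt ^ p) ^ a) ^ 2 / (2 * σt ^ 2)) ≤ L₂ * (Ck * σt ^ p) :=
      mul_le_mul_of_nonneg_left (by rw [hCk_def]; exact hE) hL₂.le
    calc I₂ ≤ σt ^ p + L₂ * Real.exp (-((σt ^ p) ^ a) ^ 2 / (2 * σt ^ 2)) := h1
      _ ≤ σt ^ p + L₂ * (Ck * σt ^ p) := by linarith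
      _ = D₂ * σt ^ p := by rw [hD₂def]; ring
  have hI₁0 : 0 ≤ I₁ := intervalIntegral.integral_nonneg hL₁.le (fun u _ => phi_nonneg u)
  have hI₂0 : 0 ≤ I₂ := intervalIntegral.integral_nonneg hL₂.le (fun u _ => phi_nonneg u)
  have hprod : I₁ * I₂ ≤ (D₁ * σt ^ p) * (D₂ * σt ^ p) :=
    mul_le_mul hI₁le hI₂le hI₂0 (by positivity)
  have hpp : σt ^ p * σt ^ p = σt ^ q * σt := by
    rw [← Real.rpow_add hσt0]
    have h1 : p + p = q + 1 := by rw [hq_def]; ring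
    rw [h1, Real.rpow_add hσt0, Real.rpow_one]
  have hfinal1 : V σx σt c₁ c₂ ≤ (D₁ * D₂) * (σt ^ q * σt) := by
    calc V σx σt c₁ c₂ ≤ I₁ * I₂ := hcross
      _ ≤ (D₁ * σt ^ p) * (D₂ * σt ^ p) := hprod
      _ = (D₁ * D₂) * (σt ^ p * σt ^ p) := by ring
      _ = (D₁ * D₂) * (σt ^ q * σt) := by rw [hpp]
  have hfinal2 : (D₁ * D₂) * (σt ^ q * σt) ≤ Ctar * σt := by
    have h1 : σt ^ q * σt ≤ Cp * σt := mul_le_mul_of_nonneg_right hσtq.le hσt0.le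
    calc (D₁ * D₂) * (σt ^ q * σt) ≤ (D₁ * D₂) * (Cp * σt) :=
          mul_le_mul_of_nonneg_left h1 (by positivity)
      _ = Ctar * σt := by rw [hCp_def]; field_simp
  have hfinal3 : Ctar * σt ≤ ε * (c₀ * (σx * (L₁ / 2))) := by
    calc Ctar * σt ≤ Ctar * (k₂ * σx) := mul_le_mul_of_nonneg_left hσt2 hCtar.le
      _ = ε * (c₀ * (σx * (L₁ / 2))) := by rw [hCtar_def]; field_simp
  -- diagonal lower bound
  have hdiag : c₀ * (σx * (L₁ / 2)) ≤ V σx σt c₁ c₁ := by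
    have := diag_lower (σx := σx) (σt := σt) c₁ K₁ hlipK₁ hk₁ hσx hσxL hσt1
    rw [← hc₀def] at this
    exact this
  have hV₂ : 0 ≤ V σx σt c₂ c₂ := by
    have hVeq₂ : V σx σt c₂ c₂
        = ∫ s in (0:ℝ)..L₂, ∫ t in (0:ℝ)..L₂, kern σx σt c₂.γ c₂.γ' c₂.γ c₂.γ' s t := rfl
    rw [hVeq₂]
    exact intervalIntegral.integral_nonneg hL₂.le
      (fun u _ => intervalIntegral.integral_nonneg hL₂.le (fun t _ => kern_nonneg u t))
  have hmono : ε * (c₀ * (σx * (L₁ / 2))) ≤ ε * V σx σt c₁ c₁ :=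
    mul_le_mul_of_nonneg_left hdiag hε.le
  have hfin : V σx σt c₁ c₂ ≤ ε * V σx σt c₁ c₁ := by
    linarith only [hfinal1, hfinal2, hfinal3, hmono, hcross]
  have h0 : 0 ≤ ε * V σx σt c₂ c₂ := mul_nonneg hε.le hV₂
  linarith only [hfin, h0]
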